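/- For any α ≥ 0 and T ≥ |α − 1|, the 2×2 diagonal matrices A = diag(1 + T, α) and B = diag(1, T + α) satisfy Tr A = Tr B, λ_min(B) = 1 (when α + T ≥ 1), ‖A − B‖₁/2 = T, and achieve equality S(A‖B) = (1 + T)·log(1 + T) − α·log(1 + T/α) (with the convention that α·log(1 + T/α) = 0 when α = 0). -/

import Mathlib

/-! All matrices involved are diagonal with real entries, and on such a matrix the continuous
functional calculus acts entrywise: `cfc f` agrees with `cfc p` for a polynomial `p` interpolating
`f` at the diagonal entries. Hence the relative entropy of diagonal matrices is
`∑ aᵢ (log aᵢ - log bᵢ)`, the trace norm is `∑ |dᵢ|` and the smallest eigenvalue is the smallest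
entry, and the four claims become scalar identities. -/

open Matrix MeasureTheory
open scoped ComplexOrder

/-- Matrix logarithm on the support: apply `Real.log` (which is `0` at `0`) to the
eigenvalues of a Hermitian matrix via functional calculus; junk value `0` otherwise. -/
noncomputable def mlog {n : Type*} [Fintype n] [DecidableEq n] (A : Matrix n n ℂ) :
    Matrix n n ℂ :=
  if hA : A.IsHermitian then hA.cfc Real.log else 0

/-- Quantum relative entropy `S(A‖B) = Tr A (log A - log B)`. -/
noncomputable def qRelEnt {n : Type*} [Fintype n] [DecidableEq n] (A B : Matrix n n ℂ) : ℝ :=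
  ((A * (mlog A - mlog B)).trace).re

/-- The positive semidefinite square root of a positive semidefinite matrix, as
`Matrix.PosSemidef.sqrt` was defined in the older Mathlib. -/
noncomputable def Matrix.PosSemidef.sqrt {n : Type*} [Fintype n] [DecidableEq n]
    {A : Matrix n n ℂ} (hA : A.PosSemidef) : Matrix n n ℂ :=
  hA.1.eigenvectorUnitary.1 * diagonal ((↑) ∘ (√·) ∘ hA.1.eigenvalues) *
  (star hA.1.eigenvectorUnitary : Matrix n n ℂ)

theorem Matrix.PosSemidef.sqrt_isHermitian {n : Type*} [Fintype n] [DecidableEq n]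
    {A : Matrix n n ℂ} (hA : A.PosSemidef) : hA.sqrt.IsHermitian := by
  unfold Matrix.PosSemidef.sqrt
  rw [Matrix.star_eq_conjTranspose]
  exact isHermitian_mul_mul_conjTranspose _
    (isHermitian_diagonal_of_self_adjoint _ (funext fun i => Complex.conj_ofReal _))

/-- Trace norm `‖X‖₁ = Tr √(Xᴴ X)`. -/
noncomputable def traceNorm {n : Type*} [Fintype n] [DecidableEq n] (X : Matrix n n ℂ) : ℝ :=
  ((Matrix.posSemidef_conjTranspose_mul_self X).sqrt.trace).re

/-- Smallest eigenvalue of a Hermitian matrix (junk value `0` otherwise). -/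
noncomputable def lamMin {n : Type*} [Fintype n] [DecidableEq n] (A : Matrix n n ℂ) : ℝ :=
  if hA : A.IsHermitian then ⨅ i, hA.eigenvalues i else 0

/-- Largest eigenvalue of a Hermitian matrix (junk value `0` otherwise). -/
noncomputable def lamMax {n : Type*} [Fintype n] [DecidableEq n] (A : Matrix n n ℂ) : ℝ :=
  if hA : A.IsHermitian then ⨆ i, hA.eigenvalues i else 0

/-- Operator norm: largest eigenvalue of `√(Xᴴ X)` (largest singular value). -/
noncomputable def opNorm {n : Type*} [Fintype n] [DecidableEq n] (X : Matrix n n ℂ) : ℝ :=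
  ⨆ i, (Matrix.posSemidef_conjTranspose_mul_self X).sqrt_isHermitian.eigenvalues i

lemma Matrix.isHermitian_diagonal_ofReal {n : Type*} [DecidableEq n] (d : n → ℝ) :
    (diagonal fun i => (d i : ℂ)).IsHermitian :=
  isHermitian_diagonal_of_self_adjoint _ (funext fun _ => Complex.conj_ofReal _)

lemma Real.mul_log_one_add_div {a t : ℝ} (h : t + a ≠ 0) :
    a * Real.log (1 + t / a) = a * (Real.log (t + a) - Real.log a) := by
  rcases eq_or_ne a 0 with rfl | ha
  · simp
  · rw [← Real.log_div h ha, add_div, div_self ha, add_comm]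

section Diagonal

variable {n : Type*} [Fintype n] [DecidableEq n]

namespace Matrix

lemma spectrum_real_diagonal_ofReal (d : n → ℝ) :
    spectrum ℝ (diagonal fun i => (d i : ℂ)) = Set.range d := by
  rw [← spectrum.preimage_algebraMap ℂ, spectrum_diagonal]
  ext x
  simp [Complex.coe_algebraMap, eq_comm]

lemma cfc_diagonal_ofReal (f : ℝ → ℝ) (d : n → ℝ) :
    cfc f (diagonal fun i => (d i : ℂ)) = diagonal fun i => (f (d i) : ℂ) := by
  set p := Lagrange.interpolate (Finset.univ.image d) id f
  have hp : ∀ i, p.eval (d i) = f (d i) := fun i =>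
    Lagrange.eval_interpolate_at_node f (Set.injOn_id _)
      (Finset.mem_image_of_mem d (Finset.mem_univ i))
  have hsa : IsSelfAdjoint (diagonal fun i => (d i : ℂ)) := isHermitian_diagonal_ofReal d
  calc cfc f (diagonal fun i => (d i : ℂ))
      = cfc p.eval (diagonal fun i => (d i : ℂ)) := by
        refine cfc_congr fun x hx => ?_
        rw [spectrum_real_diagonal_ofReal] at hx
        obtain ⟨i, rfl⟩ := hx
        exact (hp i).symm
    _ = diagonal fun i => (f (d i) : ℂ) := by
        rw [cfc_polynomial p _ hsa, ← diagonalAlgHom_apply ℝ, Polynomial.aeval_algHom_apply,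
          Polynomial.aeval_pi_apply, diagonalAlgHom_apply]
        congr! with i
        rw [← hp i, ← Complex.coe_algebraMap,
          Polynomial.aeval_algebraMap_apply_eq_algebraMap_eval]

lemma PosSemidef.sqrt_eq_cfc {A : Matrix n n ℂ} (hA : A.PosSemidef) :
    hA.sqrt = cfc Real.sqrt A := by
  rw [hA.1.cfc_eq, PosSemidef.sqrt, IsHermitian.cfc, Unitary.conjStarAlgAut_apply]
  rfl

end Matrix

lemma mlog_diagonal_ofReal (d : n → ℝ) :
    mlog (diagonal fun i => (d i : ℂ)) = diagonal fun i => (Real.log (d i) : ℂ) := by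
  rw [mlog, dif_pos (isHermitian_diagonal_ofReal d), ← IsHermitian.cfc_eq, cfc_diagonal_ofReal]

lemma qRelEnt_diagonal_ofReal (a b : n → ℝ) :
    qRelEnt (diagonal fun i => (a i : ℂ)) (diagonal fun i => (b i : ℂ)) =
      ∑ i, a i * (Real.log (a i) - Real.log (b i)) := by
  rw [qRelEnt, mlog_diagonal_ofReal, mlog_diagonal_ofReal, diagonal_sub, diagonal_mul_diagonal,
    trace_diagonal, Complex.re_sum]
  simp

lemma traceNorm_diagonal_ofReal (d : n → ℝ) :
    traceNorm (diagonal fun i => (d i : ℂ)) = ∑ i, |d i| := by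
  have h : (diagonal fun i => (d i : ℂ))ᴴ * diagonal (fun i => (d i : ℂ)) =
      diagonal fun i => ((d i * d i : ℝ) : ℂ) := by
    rw [(isHermitian_diagonal_ofReal d).eq, diagonal_mul_diagonal]
    push_cast
    rfl
  rw [traceNorm, PosSemidef.sqrt_eq_cfc, h, cfc_diagonal_ofReal, trace_diagonal, Complex.re_sum]
  simp [Real.sqrt_mul_self_eq_abs]

lemma lamMin_diagonal_ofReal (d : n → ℝ) :
    lamMin (diagonal fun i => (d i : ℂ)) = ⨅ i, d i := by
  have hA := isHermitian_diagonal_ofReal d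
  rw [lamMin, dif_pos hA, iInf, iInf, ← hA.spectrum_real_eq_range_eigenvalues,
    spectrum_real_diagonal_ofReal]

end Diagonal

/-- When `α = 0`, `α * Real.log (1 + T / α) = 0` holds literally since `T / 0 = 0` in Lean. -/
theorem relEntropy_bound_sharp_general (α T : ℝ) (hT : |α - 1| ≤ T) :
    let A : Matrix (Fin 2) (Fin 2) ℂ := Matrix.diagonal ![((1 + T : ℝ) : ℂ), (α : ℂ)]
    let B : Matrix (Fin 2) (Fin 2) ℂ := Matrix.diagonal ![1, ((T + α : ℝ) : ℂ)]
    A.trace = B.trace ∧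
    (1 ≤ α + T → lamMin B = 1) ∧
    traceNorm (A - B) / 2 = T ∧
    qRelEnt A B = (1 + T) * Real.log (1 + T) - α * Real.log (1 + T / α) := by
  intro A B
  have hT0 : 0 ≤ T := (abs_nonneg _).trans hT
  have hTα : 1 ≤ T + α := by linarith [le_abs_self (α - 1), neg_abs_le (α - 1)]
  have hA : A = diagonal fun i => ((![1 + T, α] i : ℝ) : ℂ) := by
    unfold A
    congr 1
    funext i
    fin_cases i <;> rfl
  have hB : B = diagonal fun i => ((![1, T + α] i : ℝ) : ℂ) := by
    unfold B
    congr 1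
    funext i
    fin_cases i <;> simp
  have hAB : A - B = diagonal fun i => ((![T, -T] i : ℝ) : ℂ) := by
    rw [hA, hB, diagonal_sub]
    congr 1
    funext i
    fin_cases i <;> push_cast <;> simp
  refine ⟨?_, fun h => ?_, ?_, ?_⟩
  · rw [hA, hB, trace_diagonal, trace_diagonal, Fin.sum_univ_two, Fin.sum_univ_two]
    simp only [cons_val_zero, cons_val_one, cons_val_fin_one]
    push_cast
    ring
  · rw [hB, lamMin_diagonal_ofReal]
    exact le_antisymm (ciInf_le (Set.finite_range _).bddBelow 0)
      (le_ciInf (Fin.forall_fin_two.2 ⟨le_rfl, by simpa [add_comm] using h⟩))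
  · rw [hAB, traceNorm_diagonal_ofReal, Fin.sum_univ_two]
    simp [abs_of_nonneg hT0]
  · rw [hA, hB, qRelEnt_diagonal_ofReal, Fin.sum_univ_two, Real.mul_log_one_add_div (by linarith)]
    simp only [cons_val_zero, cons_val_one, cons_val_fin_one, Real.log_one, sub_zero]
    ring

/-- The bound of the main proposition is achieved by a pair of `2×2` diagonal matrices.
(When `α = 0`, `α * Real.log (1 + T / α) = 0` holds literally since `T / 0 = 0` in Lean.) -/
theorem relEntropy_bound_sharp (α T : ℝ) (hα : 0 ≤ α) (hT : |α - 1| ≤ T) :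
    let A : Matrix (Fin 2) (Fin 2) ℂ := Matrix.diagonal ![((1 + T : ℝ) : ℂ), (α : ℂ)]
    let B : Matrix (Fin 2) (Fin 2) ℂ := Matrix.diagonal ![1, ((T + α : ℝ) : ℂ)]
    A.trace = B.trace ∧
    (1 ≤ α + T → lamMin B = 1) ∧
    traceNorm (A - B) / 2 = T ∧
    qRelEnt A B = (1 + T) * Real.log (1 + T) - α * Real.log (1 + T / α) :=
  relEntropy_bound_sharp_general α T hT
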